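/- Let (Ω, 𝓕, P) be a probability space with a filtration (𝓕_i)_{i∈ℕ}, and let (W_i)_{i∈ℕ} be an adapted sequence of nonnegative integrable random variables. Let C > 1 and assume that for every i ≥ 1, E[W_i | 𝓕_{i−1}] ≤ (1 − 1/C) W_{i−1} + C almost surely. Set C₁ = C(2C + 2), η = 2/(2 − 1/C), and C₃ = 1 + C² + (C − 1)C₁. Assume W_0 ≤ C₁ almost surely. Then for every integer d ≥ 1, the delayed hitting time ρ_d = inf{ i ≥ d : W_i ≤ C₁ } satisfies E[η^{ρ_d}] ≤ C₃ η^d. -/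

import Mathlib

/-!
Let `A n` be the event `ρ_d > n`, i.e. `W i > C₁` for all `i ∈ [d, n]`. Summing a geometric
series, `η ^ ρ_d = 1 + (η - 1) ∑ₙ η ^ n 1_{A n}` (also when `ρ_d = ∞`), so
`E[η ^ ρ_d] = 1 + (η - 1) ∑ₙ η ^ n P(A n)`, and `A n = Ω` for `n < d`.

On `A n` we have `W n > C₁`, and there the drift bound improves to
`(1 - 1/C) W n + C ≤ W n / η - 1`. As `A n` is `𝓕 n`-measurable, `b n = E[W n; A n]` satisfies
`b (n + 1) ≤ b n / η - P(A n)` for `n ≥ d`, which telescopes to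
`∑_{n ≥ d} η ^ n P(A n) ≤ η ^ d b d ≤ η ^ d E[W d]`. Finally, iterating the drift from
`W 0 ≤ C₁` gives `E[W d] ≤ (1 - 1/C) ^ d C₁ + C²`, and `η - 1 = 1 / (2C - 1)`.
-/

open MeasureTheory Classical

theorem le_pow_mul_add_of_le_mul_add {x : ℕ → ℝ} {a c K M : ℝ} (ha : 0 ≤ a)
    (hK : c ≤ (1 - a) * K) (h0 : x 0 ≤ M + K) (h : ∀ n, x (n + 1) ≤ a * x n + c) (n : ℕ) :
    x n ≤ a ^ n * M + K := by
  induction n with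
  | zero => simpa using h0
  | succ n ih =>
    calc x (n + 1) ≤ a * (a ^ n * M + K) + c := by have := h n; nlinarith
      _ ≤ a ^ (n + 1) * M + K := by rw [pow_succ]; nlinarith

open Finset in
theorem sum_pow_mul_le_of_le_div_sub {η : ℝ} (hη : 1 ≤ η) {b p : ℕ → ℝ}
    (hb : ∀ n, 0 ≤ b n) (hp : ∀ n, 0 ≤ p n) (h : ∀ n, b (n + 1) ≤ b n / η - p n) (m : ℕ) :
    ∑ k ∈ range m, η ^ k * p k ≤ b 0 := by
  have hη0 : 0 < η := zero_lt_one.trans_le hη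
  suffices ∑ k ∈ range m, η ^ k * p k + η ^ m * b m ≤ b 0 by
    nlinarith [pow_nonneg hη0.le m, hb m]
  induction m with
  | zero => simp
  | succ m ih =>
    have hstep : η ^ (m + 1) * b (m + 1) ≤ η ^ m * b m - η ^ (m + 1) * p m := by
      calc η ^ (m + 1) * b (m + 1) ≤ η ^ (m + 1) * (b m / η - p m) := by gcongr; exact h m
        _ = η ^ m * b m - η ^ (m + 1) * p m := by field_simp; ring
    have hpow : η ^ m * p m ≤ η ^ (m + 1) * p m :=
      mul_le_mul_of_nonneg_right (pow_le_pow_right₀ hη m.le_succ) (hp m)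
    rw [sum_range_succ]
    linarith

theorem ofReal_pow_sInf_eq_one_add_tsum {η : ℝ} (hη : 1 < η) (S : Set ℕ) :
    (if S.Nonempty then ENNReal.ofReal (η ^ sInf S) else ⊤) =
      1 + ENNReal.ofReal (η - 1) *
        ∑' n, if ∀ i ∈ S, n < i then ENNReal.ofReal (η ^ n) else 0 := by
  split_ifs with hS
  · have hbelow : ∀ n, (∀ i ∈ S, n < i) ↔ n < sInf S := fun n =>
      ⟨fun h => h _ (Nat.sInf_mem hS), fun h i hi => h.trans_le (Nat.sInf_le hi)⟩
    have hsum : (∑' n, if ∀ i ∈ S, n < i then ENNReal.ofReal (η ^ n) else 0) =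
        ENNReal.ofReal (∑ n ∈ Finset.range (sInf S), η ^ n) := by
      rw [ENNReal.ofReal_sum_of_nonneg (fun n _ => by positivity),
        tsum_eq_sum (s := Finset.range (sInf S))]
      · exact Finset.sum_congr rfl fun n hn => if_pos ((hbelow n).2 (Finset.mem_range.1 hn))
      · exact fun n hn => if_neg fun h => hn (Finset.mem_range.2 ((hbelow n).1 h))
    rw [hsum, ← ENNReal.ofReal_mul (by linarith), ← ENNReal.ofReal_one,
      ← ENNReal.ofReal_add zero_le_one (mul_nonneg (by linarith) (by positivity)),
      mul_comm, geom_sum_mul, add_sub_cancel]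
  · have hall : ∀ n, ∀ i ∈ S, n < i := fun n i hi => absurd ⟨i, hi⟩ hS
    simp_rw [if_pos (hall _)]
    have htop : ∑' n : ℕ, ENNReal.ofReal (η ^ n) = ⊤ :=
      top_unique <| (ENNReal.tsum_const_eq_top_of_ne_zero one_ne_zero).symm.le.trans <|
        ENNReal.tsum_le_tsum fun n => ENNReal.one_le_ofReal.2 (one_le_pow₀ hη.le)
    rw [htop, ENNReal.mul_top (by simpa using hη), add_top]

theorem lintegral_ofReal_pow_sInf_eq {Ω : Type*} [MeasurableSpace Ω] (μ : Measure Ω)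
    [IsProbabilityMeasure μ] {η : ℝ} (hη : 1 < η) (S : Ω → Set ℕ) {A : ℕ → Set Ω}
    (hA : ∀ n, MeasurableSet (A n)) (hSA : ∀ n ω, ω ∈ A n ↔ ∀ i ∈ S ω, n < i) :
    ∫⁻ ω, (if (S ω).Nonempty then ENNReal.ofReal (η ^ sInf (S ω)) else ⊤) ∂μ =
      1 + ENNReal.ofReal (η - 1) * ∑' n, ENNReal.ofReal (η ^ n) * μ (A n) := by
  have hind : ∀ ω, (∑' n, if ∀ i ∈ S ω, n < i then ENNReal.ofReal (η ^ n) else 0) =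
      ∑' n, (A n).indicator (fun _ => ENNReal.ofReal (η ^ n)) ω := fun ω => by
    simp only [Set.indicator_apply, hSA]
  have hmeas : ∀ n, Measurable ((A n).indicator fun _ => ENNReal.ofReal (η ^ n)) :=
    fun n => measurable_const.indicator (hA n)
  simp_rw [ofReal_pow_sInf_eq_one_add_tsum hη, hind]
  rw [lintegral_add_left measurable_const, lintegral_const, measure_univ, one_mul,
    lintegral_const_mul _ (Measurable.tsum hmeas),
    lintegral_tsum fun n => (hmeas n).aemeasurable]
  simp only [lintegral_indicator_const (hA _)]

section Drift

variable {Ω : Type*} {m0 : MeasurableSpace Ω} {μ : Measure Ω} {𝓕 : Filtration ℕ m0}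
  {W : ℕ → Ω → ℝ}

theorem setIntegral_le_of_condExp_le {m : MeasurableSpace Ω} (hm : m ≤ m0)
    [SigmaFinite (μ.trim hm)] {f g : Ω → ℝ} (hf : Integrable f μ) (hg : Integrable g μ)
    {s : Set Ω} (hs : MeasurableSet[m] s) (h : μ[f|m] ≤ᵐ[μ] g) :
    ∫ x in s, f x ∂μ ≤ ∫ x in s, g x ∂μ := by
  rw [← setIntegral_condExp hm hf hs]
  exact setIntegral_mono_ae integrable_condExp.integrableOn hg.integrableOn h

theorem setIntegral_mul_add_const {f : Ω → ℝ} (hf : Integrable f μ) [IsFiniteMeasure μ]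
    (a b : ℝ) (s : Set Ω) :
    ∫ x in s, (a * f x + b) ∂μ = a * ∫ x in s, f x ∂μ + μ.real s * b := by
  rw [integral_add (hf.const_mul a).integrableOn (integrable_const b).integrableOn,
    integral_const_mul, setIntegral_const, smul_eq_mul]

theorem integral_succ_le_of_drift [IsProbabilityMeasure μ] (hint : ∀ n, Integrable (W n) μ)
    {a b : ℝ} (hdrift : ∀ n, μ[W (n + 1)|𝓕 n] ≤ᵐ[μ] fun ω => a * W n ω + b) (n : ℕ) :
    ∫ ω, W (n + 1) ω ∂μ ≤ a * ∫ ω, W n ω ∂μ + b := by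
  have := setIntegral_le_of_condExp_le (g := fun ω => a * W n ω + b) (𝓕.le n) (hint (n + 1))
    (((hint n).const_mul a).add (integrable_const b)) MeasurableSet.univ (hdrift n)
  rwa [setIntegral_mul_add_const (hint n), probReal_univ, one_mul, Measure.restrict_univ] at this

def notReturnedBy (W : ℕ → Ω → ℝ) (c : ℝ) (d n : ℕ) : Set Ω :=
  {ω | ∀ i, d ≤ i → i ≤ n → c < W i ω}

theorem measurableSet_notReturnedBy (hadapt : Adapted 𝓕 W) (c : ℝ) (d n : ℕ) :
    MeasurableSet[𝓕 n] (notReturnedBy W c d n) := by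
  simp only [notReturnedBy, Set.ofPred_forall]
  exact .iInter fun i => .iInter fun _ => .iInter fun hin =>
    measurableSet_lt measurable_const ((hadapt i).mono (𝓕.mono hin) le_rfl)

theorem notReturnedBy_of_lt {c : ℝ} {d n : ℕ} (h : n < d) : notReturnedBy W c d n = Set.univ :=
  Set.eq_univ_of_forall fun _ _ hi hin => absurd (hi.trans hin) (not_le.2 h)

theorem notReturnedBy_succ_subset (c : ℝ) (d n : ℕ) :
    notReturnedBy W c d (n + 1) ⊆ notReturnedBy W c d n :=
  fun _ hω i hi hin => hω i hi (hin.trans n.le_succ)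

theorem mem_notReturnedBy_iff {c : ℝ} {d n : ℕ} {ω : Ω} :
    ω ∈ notReturnedBy W c d n ↔ ∀ i ∈ {i | d ≤ i ∧ W i ω ≤ c}, n < i := by
  simp only [notReturnedBy, Set.mem_ofPred_eq, and_imp]
  exact forall_congr' fun _ => ⟨fun h hi hc => not_le.1 fun hin => (h hi hin).not_ge hc,
    fun h hi hin => not_le.1 fun hc => (h hi hc).not_ge hin⟩

theorem setIntegral_notReturnedBy_succ_le [IsFiniteMeasure μ] (hadapt : Adapted 𝓕 W)
    (hnonneg : ∀ n ω, 0 ≤ W n ω) (hint : ∀ n, Integrable (W n) μ) {a b : ℝ}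
    (hdrift : ∀ n, μ[W (n + 1)|𝓕 n] ≤ᵐ[μ] fun ω => a * W n ω + b) {c η : ℝ}
    (hpoint : ∀ w, c < w → a * w + b ≤ w / η - 1) {d n : ℕ} (hdn : d ≤ n) :
    ∫ ω in notReturnedBy W c d (n + 1), W (n + 1) ω ∂μ ≤
      (∫ ω in notReturnedBy W c d n, W n ω ∂μ) / η - μ.real (notReturnedBy W c d n) := by
  set A := notReturnedBy W c d n
  have hAF : MeasurableSet[𝓕 n] A := measurableSet_notReturnedBy hadapt c d n
  calc ∫ ω in notReturnedBy W c d (n + 1), W (n + 1) ω ∂μ ≤ ∫ ω in A, W (n + 1) ω ∂μ :=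
        setIntegral_mono_set (hint _).integrableOn (.of_forall fun ω => hnonneg _ ω)
          (.of_forall (notReturnedBy_succ_subset c d n))
    _ ≤ ∫ ω in A, (a * W n ω + b) ∂μ := setIntegral_le_of_condExp_le (𝓕.le n) (hint _)
        (((hint n).const_mul a).add (integrable_const b)) hAF (hdrift n)
    _ ≤ ∫ ω in A, (W n ω / η - 1) ∂μ :=
        setIntegral_mono_on (((hint n).const_mul a).add (integrable_const b)).integrableOn
          (((hint n).div_const η).sub (integrable_const 1)).integrableOn (𝓕.le n _ hAF)
          fun ω hω => hpoint _ (hω n hdn le_rfl)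
    _ = (∫ ω in A, W n ω ∂μ) / η - μ.real A := by
        rw [integral_sub ((hint n).div_const η).integrableOn (integrable_const 1).integrableOn,
          integral_div, setIntegral_const, smul_eq_mul, mul_one]

open Finset in
theorem tsum_ofReal_pow_mul_notReturnedBy_le [IsProbabilityMeasure μ] (hadapt : Adapted 𝓕 W)
    (hnonneg : ∀ n ω, 0 ≤ W n ω) (hint : ∀ n, Integrable (W n) μ) {a b : ℝ}
    (hdrift : ∀ n, μ[W (n + 1)|𝓕 n] ≤ᵐ[μ] fun ω => a * W n ω + b) {c η : ℝ} (hη : 1 ≤ η)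
    (hpoint : ∀ w, c < w → a * w + b ≤ w / η - 1) (d : ℕ) :
    ∑' n, ENNReal.ofReal (η ^ n) * μ (notReturnedBy W c d n) ≤
      ENNReal.ofReal (∑ n ∈ range d, η ^ n + η ^ d * ∫ ω, W d ω ∂μ) := by
  set A := notReturnedBy W c d
  set f : ℕ → ℝ := fun n => η ^ n * μ.real (A n)
  have hf : ∀ n, 0 ≤ f n := fun n => by positivity
  have hdelayed : ∀ m, ∑ k ∈ range m, η ^ k * μ.real (A (d + k)) ≤ ∫ ω, W d ω ∂μ :=
    fun m => (sum_pow_mul_le_of_le_div_sub hη (b := fun k => ∫ ω in A (d + k), W (d + k) ω ∂μ)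
      (fun k => setIntegral_nonneg (𝓕.le _ _ (measurableSet_notReturnedBy hadapt c d _))
        fun ω _ => hnonneg (d + k) ω)
      (fun _ => measureReal_nonneg)
      (fun k => setIntegral_notReturnedBy_succ_le hadapt hnonneg hint hdrift hpoint
        (d.le_add_right k)) m).trans
      (setIntegral_le_integral (hint d) (.of_forall (hnonneg d)))
  have hpartial : ∀ m, ∑ n ∈ range m, f n ≤ ∑ n ∈ range d, η ^ n + η ^ d * ∫ ω, W d ω ∂μ := by
    intro m
    calc ∑ n ∈ range m, f n ≤ ∑ n ∈ range (d + m), f n :=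
          sum_le_sum_of_subset_of_nonneg (range_subset_range.2 (m.le_add_left d))
            fun n _ _ => hf n
      _ = ∑ n ∈ range d, η ^ n + η ^ d * ∑ k ∈ range m, η ^ k * μ.real (A (d + k)) := by
          rw [sum_range_add, mul_sum]
          congr 1
          · refine sum_congr rfl fun n hn => ?_
            dsimp only [f, A]
            rw [notReturnedBy_of_lt (mem_range.1 hn), probReal_univ, mul_one]
          · exact sum_congr rfl fun k _ => by dsimp only [f]; rw [pow_add, mul_assoc]
      _ ≤ _ := by gcongr; exact hdelayed m
  have hterm : ∀ n, ENNReal.ofReal (η ^ n) * μ (A n) = ENNReal.ofReal (f n) := fun n => by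
    rw [ENNReal.ofReal_mul (by positivity), ofReal_measureReal]
  simp_rw [hterm]
  rw [← ENNReal.ofReal_tsum_of_nonneg hf (summable_of_sum_range_le hf hpartial)]
  exact ENNReal.ofReal_le_ofReal (Real.tsum_le_of_sum_range_le hf hpartial)

end Drift

theorem one_lt_two_div_two_sub_inv {C : ℝ} (hC : 1 < C) : 1 < 2 / (2 - 1 / C) := by
  have : 0 < 1 / C := by positivity
  rw [lt_div_iff₀ (by linarith [(div_lt_one (by positivity : 0 < C)).2 hC]), one_mul]
  linarith

theorem mul_add_le_div_sub_one {C w : ℝ} (hC : 1 < C) (hw : C * (2 * C + 2) < w) :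
    (1 - 1 / C) * w + C ≤ w / (2 / (2 - 1 / C)) - 1 := by
  have hC0 : 0 < C := by linarith
  have h1 : w / (2 / (2 - 1 / C)) - 1 = w - w / C / 2 - 1 := by field_simp
  have h2 : (1 - 1 / C) * w = w - w / C := by field_simp
  have h3 : 2 * (C + 1) < w / C := by rw [lt_div_iff₀ hC0]; linarith
  linarith

open Finset in
theorem one_add_mul_geom_sum_add_le {C E : ℝ} (hC : 1 < C) {d : ℕ} (hd : 1 ≤ d)
    (hE : E ≤ (1 - 1 / C) ^ d * (C * (2 * C + 2)) + C ^ 2) :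
    1 + (2 / (2 - 1 / C) - 1) * (∑ n ∈ range d, (2 / (2 - 1 / C)) ^ n +
        (2 / (2 - 1 / C)) ^ d * E) ≤
      (1 + C ^ 2 + (C - 1) * (C * (2 * C + 2))) * (2 / (2 - 1 / C)) ^ d := by
  have hC0 : 0 < C := by linarith
  have hη : 2 / (2 - 1 / C) - 1 = 1 / (2 * C - 1) := by
    have : 2 * C - 1 ≠ 0 := by linarith
    field_simp
    ring
  set η := 2 / (2 - 1 / C)
  set C₁ := C * (2 * C + 2)
  set α := 1 - 1 / C
  have hη0 : 0 ≤ η - 1 := by rw [hη]; exact (one_div_pos.2 (by linarith)).le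
  have hη1 : η - 1 ≤ 1 := by rw [hη, div_le_one (by linarith)]; linarith
  have hinv : 0 < 1 / C := by positivity
  have hinv1 : 1 / C ≤ 1 := (div_le_one hC0).2 hC.le
  have hα0 : 0 ≤ α := sub_nonneg.2 hinv1
  have hαC : α ≤ C - 1 := by nlinarith [show C * (1 / C) = 1 by field_simp]
  have hαd : α ^ d ≤ α := pow_le_of_le_one hα0 (by linarith) (by omega)
  have hC₁ : 0 ≤ C₁ := by positivity
  have hcore : (η - 1) * E ≤ C ^ 2 + (C - 1) * C₁ := calc
    (η - 1) * E ≤ (η - 1) * (α * C₁ + C ^ 2) := by gcongr; nlinarith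
    _ ≤ α * C₁ + C ^ 2 := mul_le_of_le_one_left (by positivity) hη1
    _ ≤ C ^ 2 + (C - 1) * C₁ := by nlinarith
  have hgeom : (η - 1) * ∑ n ∈ range d, η ^ n = η ^ d - 1 := by rw [mul_comm, geom_sum_mul]
  have hηd : 0 ≤ η ^ d := pow_nonneg (by linarith) d
  nlinarith [mul_le_mul_of_nonneg_left hcore hηd]

/-- Part 2 of Lemma "annex": for an adapted nonnegative process satisfying the
Foster–Lyapunov drift condition with constants `(1 - 1/C, C)` and started in
the sublevel set `{W ≤ C₁}` with `C₁ = C(2C+2)`, the `d`-delayed return time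
`ρ_d = inf{i ≥ d : W_i ≤ C₁}` satisfies `E[η^{ρ_d}] ≤ C₃ η^d` with
`η = 2/(2 - 1/C)` and `C₃ = 1 + C² + (C-1)C₁` (the integrand is `∞` when
`ρ_d = ∞`). -/
theorem delayed_return_time_exp_moment {Ω : Type*} {m0 : MeasurableSpace Ω}
    (μ : Measure Ω) [IsProbabilityMeasure μ]
    (𝓕 : Filtration ℕ m0) (W : ℕ → Ω → ℝ)
    (hadapt : Adapted 𝓕 W) (hnonneg : ∀ i ω, 0 ≤ W i ω)
    (hint : ∀ i, Integrable (W i) μ)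
    (C : ℝ) (hC : 1 < C)
    (hdrift : ∀ i : ℕ, 1 ≤ i →
      ∀ᵐ ω ∂μ, (μ[W i | 𝓕 (i - 1)]) ω ≤ (1 - 1 / C) * W (i - 1) ω + C)
    (hW0 : ∀ᵐ ω ∂μ, W 0 ω ≤ C * (2 * C + 2))
    (d : ℕ) (hd : 1 ≤ d) :
    (∫⁻ ω, (if {i : ℕ | d ≤ i ∧ W i ω ≤ C * (2 * C + 2)}.Nonempty
        then ENNReal.ofReal
          ((2 / (2 - 1 / C)) ^ sInf {i : ℕ | d ≤ i ∧ W i ω ≤ C * (2 * C + 2)})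
        else ⊤) ∂μ) ≤
      ENNReal.ofReal ((1 + C ^ 2 + (C - 1) * (C * (2 * C + 2))) *
        (2 / (2 - 1 / C)) ^ d) := by
  have hη := one_lt_two_div_two_sub_inv hC
  have hdrift_succ : ∀ n, μ[W (n + 1)|𝓕 n] ≤ᵐ[μ] fun ω => (1 - 1 / C) * W n ω + C :=
    fun n => hdrift (n + 1) (Nat.le_add_left 1 n)
  have hEW0 : ∫ ω, W 0 ω ∂μ ≤ C * (2 * C + 2) + C ^ 2 := by
    have := integral_mono_ae (hint 0) (integrable_const _) hW0
    simp only [integral_const, probReal_univ, one_smul] at this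
    exact this.trans (le_add_of_nonneg_right (sq_nonneg C))
  have hEW : ∫ ω, W d ω ∂μ ≤ (1 - 1 / C) ^ d * (C * (2 * C + 2)) + C ^ 2 :=
    le_pow_mul_add_of_le_mul_add (x := fun n => ∫ ω, W n ω ∂μ)
      (sub_nonneg.2 ((div_le_one (by linarith)).2 hC.le))
      (by field_simp; linarith) hEW0 (integral_succ_le_of_drift hint hdrift_succ) d
  set η := 2 / (2 - 1 / C)
  set S := ∑ n ∈ Finset.range d, η ^ n + η ^ d * ∫ ω, W d ω ∂μ
  have hS : 0 ≤ S := add_nonneg (Finset.sum_nonneg fun n _ => by positivity)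
    (mul_nonneg (by positivity) (integral_nonneg (hnonneg d)))
  rw [lintegral_ofReal_pow_sInf_eq μ hη _
    (fun n => 𝓕.le n _ (measurableSet_notReturnedBy hadapt _ d n))
    (fun _ _ => mem_notReturnedBy_iff)]
  calc _ ≤ 1 + ENNReal.ofReal (η - 1) * ENNReal.ofReal S := by
        gcongr
        exact tsum_ofReal_pow_mul_notReturnedBy_le hadapt hnonneg hint hdrift_succ hη.le
          (fun w hw => mul_add_le_div_sub_one hC hw) d
    _ = ENNReal.ofReal (1 + (η - 1) * S) := by
        rw [← ENNReal.ofReal_mul (by linarith), ← ENNReal.ofReal_one,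
          ← ENNReal.ofReal_add zero_le_one (mul_nonneg (by linarith) hS)]
    _ ≤ _ := ENNReal.ofReal_le_ofReal (one_add_mul_geom_sum_add_le hC hd hEW)
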